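/- arXiv:2003.06130 — 2 statements merged into one kernel-verified Lean document; each statement's English description precedes it below -/
import Mathlib

section
/- Let Φ be a measurable functional calculus on (X, Σ) with values in closed operators on a Hilbert space H. Then: (d) for every measurable f : X → 𝕜 the operator Φ(f) is densely defined; (e) if f is bounded then ‖Φ(f)‖ ≤ ‖f‖_∞; (f) Φ is bp-continuous, i.e. if a sequence of measurable functions f_n converges to f pointwise with sup_n ‖f_n‖_∞ < ∞, then Φ(f_n)x → Φ(f)x in norm for every x ∈ H. -/
open scoped Topology

noncomputable section

/-- Composition `S ∘ T` of partially defined linear operators, with domain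
`{x ∈ dom T | T x ∈ dom S}`. -/
noncomputable def LinearPMap.compP {R E : Type*} [Ring R] [AddCommGroup E] [Module R E]
    (S T : E →ₗ.[R] E) : E →ₗ.[R] E where
  domain := (S.domain.comap T.toFun).map T.domain.subtype
  toFun := S.toFun.comp <| LinearMap.codRestrict S.domain
      (T.toFun.comp (Submodule.inclusion (Submodule.map_subtype_le _ _)))
      (fun x => by
        obtain ⟨y, hy, hyx⟩ := Submodule.mem_map.mp x.2
        have hxy : Submodule.inclusion
            (Submodule.map_subtype_le T.domain (S.domain.comap T.toFun)) x = y := by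
          apply Subtype.ext
          simpa using hyx.symm
        rw [LinearMap.comp_apply, hxy]
        exact hy)

/-- A measurable functional calculus on a measurable space `X`, with values in
closed partially defined operators on a Hilbert space `H` over `𝕜`. -/
structure MeasFC (X : Type*) [MeasurableSpace X] (𝕜 : Type*) [RCLike 𝕜]
    (H : Type*) [NormedAddCommGroup H] [InnerProductSpace 𝕜 H] [CompleteSpace H] where
  ap : (X → 𝕜) → (H →ₗ.[𝕜] H)
  isClosed : ∀ f : X → 𝕜, Measurable f → (ap f).IsClosed
  mfc1 : ap (fun _ => 1) = (LinearMap.id : H →ₗ[𝕜] H).toPMap ⊤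
  mfc2_add : ∀ f g : X → 𝕜, Measurable f → Measurable g → ap f + ap g ≤ ap (f + g)
  mfc2_smul : ∀ (c : 𝕜) (f : X → 𝕜), Measurable f → c • ap f ≤ ap (fun x => c * f x)
  mfc3_le : ∀ f g : X → 𝕜, Measurable f → Measurable g → (ap f).compP (ap g) ≤ ap (f * g)
  mfc3_dom : ∀ f g : X → 𝕜, Measurable f → Measurable g →
      ((ap f).compP (ap g)).domain = (ap g).domain ⊓ (ap (f * g)).domain
  mfc4_dom : ∀ f : X → 𝕜, Measurable f → (∃ C, ∀ x, ‖f x‖ ≤ C) → (ap f).domain = ⊤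
  mfc4_cont : ∀ f : X → 𝕜, Measurable f → (∃ C, ∀ x, ‖f x‖ ≤ C) →
      Continuous fun x : (ap f).domain => ap f x
  mfc4_star : ∀ f : X → 𝕜, Measurable f → (∃ C, ∀ x, ‖f x‖ ≤ C) →
      (ap f).adjoint = ap (fun x => starRingEnd 𝕜 (f x))
  mfc5 : ∀ (f : ℕ → X → 𝕜) (g : X → 𝕜), (∀ n, Measurable (f n)) → Measurable g →
      (∃ C, ∀ n x, ‖f n x‖ ≤ C) →
      (∀ x, Filter.Tendsto (fun n => f n x) Filter.atTop (𝓝 (g x))) →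
      ∀ (x y : H) (hn : ∀ n, x ∈ (ap (f n)).domain) (hg : x ∈ (ap g).domain),
        Filter.Tendsto (fun n => (inner 𝕜 (ap (f n) ⟨x, hn n⟩) y : 𝕜)) Filter.atTop
          (𝓝 (inner 𝕜 (ap g ⟨x, hg⟩) y))

/-- `B` is a `Φ`-null set: `Φ(𝟏_B) = 0`. -/
def MeasFC.IsNull {X : Type*} [MeasurableSpace X] {𝕜 : Type*} [RCLike 𝕜]
    {H : Type*} [NormedAddCommGroup H] [InnerProductSpace 𝕜 H] [CompleteSpace H]
    (Φ : MeasFC X 𝕜 H) (B : Set X) : Prop :=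
  Φ.ap (B.indicator fun _ => 1) = (0 : H →ₗ[𝕜] H).toPMap ⊤

variable {𝕜 : Type*} [RCLike 𝕜] {X : Type*} [MeasurableSpace X]
  {H : Type*} [NormedAddCommGroup H] [InnerProductSpace 𝕜 H] [CompleteSpace H]

/-!
For bounded `f`, the adjoint relation `Φ(f)* = Φ(f̄)` and multiplicativity give
`⟪Φ(|f|²)x, x⟫ = ‖Φ(f)x‖²`; with additivity, `|f|² + |g|² = c` forces
`‖Φ(f)x‖² + ‖Φ(g)x‖² = c‖x‖²`.

(d) For `eₙ = 𝟏{|f| ≤ n}` both `eₙ` and `f eₙ` are bounded, so `Φ(eₙ)` maps `H` into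
`dom Φ(f)`; since `Φ(eₙ) → I` weakly, a vector orthogonal to `dom Φ(f)` is orthogonal to itself.
(e) Complete `|f|²` to the constant `C²` by `|g|²` with `g = √(C² - |f|²)`.
(f) `‖Φ(fₙ)x - Φ(f)x‖² = ⟪Φ(|fₙ - f|²)x, x⟫`, which tends to `0` by the weak continuity (MFC5).
-/

open Filter
open scoped InnerProductSpace ComplexConjugate

namespace LinearPMap

variable {R E F : Type*} [Ring R] [AddCommGroup E] [Module R E] [AddCommGroup F] [Module R F]

theorem apply_eq_of_le {S T : E →ₗ.[R] F} (h : S ≤ T) {x : E} (hS : x ∈ S.domain)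
    (hT : x ∈ T.domain) : T ⟨x, hT⟩ = S ⟨x, hS⟩ :=
  (h.2 rfl).symm

theorem mem_compP_domain {S T : E →ₗ.[R] E} {x : E} (hx : x ∈ T.domain)
    (hTx : T ⟨x, hx⟩ ∈ S.domain) : x ∈ (S.compP T).domain :=
  Submodule.mem_map.mpr ⟨⟨x, hx⟩, Submodule.mem_comap.mpr hTx, rfl⟩

theorem apply_mem_domain_of_mem_compP {S T : E →ₗ.[R] E} {x : E}
    (h : x ∈ (S.compP T).domain) (hx : x ∈ T.domain) : T ⟨x, hx⟩ ∈ S.domain := by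
  obtain ⟨y, hy, rfl⟩ := Submodule.mem_map.mp h
  exact Submodule.mem_comap.mp hy

end LinearPMap

namespace MeasFC

variable (Φ : MeasFC X 𝕜 H)

theorem ap_congr {f g : X → 𝕜} (e : f = g) {x : H} (hf : x ∈ (Φ.ap f).domain)
    (hg : x ∈ (Φ.ap g).domain) : Φ.ap f ⟨x, hf⟩ = Φ.ap g ⟨x, hg⟩ := by
  subst e; rfl

theorem mem_domain_of_bounded {f : X → 𝕜} (hf : Measurable f) (hb : ∃ C, ∀ t, ‖f t‖ ≤ C)
    (x : H) : x ∈ (Φ.ap f).domain :=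
  Φ.mfc4_dom f hf hb ▸ Submodule.mem_top

theorem ap_one_apply {x : H} (hx : x ∈ (Φ.ap fun _ => 1).domain) :
    Φ.ap (fun _ => 1) ⟨x, hx⟩ = x := by
  rw [LinearPMap.apply_eq_of_le Φ.mfc1.ge Submodule.mem_top hx]
  rfl

theorem ap_add_apply {f g : X → 𝕜} (hf : Measurable f) (hg : Measurable g) {x : H}
    (hxf : x ∈ (Φ.ap f).domain) (hxg : x ∈ (Φ.ap g).domain)
    (hxfg : x ∈ (Φ.ap (f + g)).domain) :
    Φ.ap (f + g) ⟨x, hxfg⟩ = Φ.ap f ⟨x, hxf⟩ + Φ.ap g ⟨x, hxg⟩ :=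
  LinearPMap.apply_eq_of_le (Φ.mfc2_add f g hf hg) (x := x) ⟨hxf, hxg⟩ hxfg

theorem ap_sub_apply {f g : X → 𝕜} (hf : Measurable f) (hg : Measurable g) {x : H}
    (hxf : x ∈ (Φ.ap f).domain) (hxg : x ∈ (Φ.ap g).domain)
    (hxfg : x ∈ (Φ.ap (f - g)).domain) :
    Φ.ap (f - g) ⟨x, hxfg⟩ = Φ.ap f ⟨x, hxf⟩ - Φ.ap g ⟨x, hxg⟩ := by
  have e : f - g + g = f := sub_add_cancel f g
  have h := Φ.ap_add_apply (hf.sub hg) hg hxfg hxg (by rwa [e])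
  rw [Φ.ap_congr e _ hxf] at h
  rw [h, add_sub_cancel_right]

theorem ap_smul_apply (c : 𝕜) {f : X → 𝕜} (hf : Measurable f) {x : H}
    (hx : x ∈ (Φ.ap f).domain) (hcx : x ∈ (Φ.ap fun t => c * f t).domain) :
    Φ.ap (fun t => c * f t) ⟨x, hcx⟩ = c • Φ.ap f ⟨x, hx⟩ :=
  LinearPMap.apply_eq_of_le (Φ.mfc2_smul c f hf) (x := x) hx hcx

theorem ap_const_apply (c : 𝕜) (x : H) (hx : x ∈ (Φ.ap fun _ => c).domain) :
    Φ.ap (fun _ => c) ⟨x, hx⟩ = c • x := by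
  have e : (fun _ : X => c * 1) = fun _ => c := by simp
  have h1 := Φ.mem_domain_of_bounded measurable_const ⟨1, fun _ => norm_one.le⟩ x
  rw [← Φ.ap_congr e (e ▸ hx), Φ.ap_smul_apply c measurable_const h1, Φ.ap_one_apply]

theorem ap_mul_apply {f g : X → 𝕜} (hf : Measurable f) (hg : Measurable g) {x : H}
    (hx : x ∈ (Φ.ap g).domain) (hgx : Φ.ap g ⟨x, hx⟩ ∈ (Φ.ap f).domain)
    (hfgx : x ∈ (Φ.ap (f * g)).domain) :
    Φ.ap (f * g) ⟨x, hfgx⟩ = Φ.ap f ⟨Φ.ap g ⟨x, hx⟩, hgx⟩ :=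
  LinearPMap.apply_eq_of_le (Φ.mfc3_le f g hf hg) (LinearPMap.mem_compP_domain hx hgx) hfgx

theorem ap_apply_mem_domain {f g : X → 𝕜} (hf : Measurable f) (hg : Measurable g) {x : H}
    (hx : x ∈ (Φ.ap g).domain) (hfgx : x ∈ (Φ.ap (f * g)).domain) :
    Φ.ap g ⟨x, hx⟩ ∈ (Φ.ap f).domain :=
  LinearPMap.apply_mem_domain_of_mem_compP (Φ.mfc3_dom f g hf hg ▸ ⟨hx, hfgx⟩) hx

theorem inner_ap_apply {f : X → 𝕜} (hf : Measurable f) (hb : ∃ C, ∀ t, ‖f t‖ ≤ C) {x y : H}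
    (hx : x ∈ (Φ.ap f).domain) (hy : y ∈ (Φ.ap fun t => conj (f t)).domain) :
    ⟪Φ.ap f ⟨x, hx⟩, y⟫_𝕜 = ⟪x, Φ.ap (fun t => conj (f t)) ⟨y, hy⟩⟫_𝕜 := by
  set g : X → 𝕜 := fun t => conj (f t)
  have hg : Measurable g := RCLike.continuous_conj.measurable.comp hf
  have hgb : ∃ C, ∀ t, ‖g t‖ ≤ C := hb.imp fun C hC t => (RCLike.norm_conj _).trans_le (hC t)
  have hadj : (Φ.ap g).adjoint = Φ.ap f := by
    simpa [g] using Φ.mfc4_star g hg hgb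
  have hdense : Dense ((Φ.ap g).domain : Set H) := by
    simp [Φ.mfc4_dom g hg hgb, dense_univ]
  have hxa : x ∈ (Φ.ap g).adjoint.domain := hadj ▸ hx
  rw [LinearPMap.apply_eq_of_le hadj.le hxa hx]
  exact LinearPMap.adjoint_isFormalAdjoint hdense ⟨x, hxa⟩ ⟨y, hy⟩

theorem inner_ap_norm_sq_apply_self {f : X → 𝕜} (hf : Measurable f)
    (hb : ∃ C, ∀ t, ‖f t‖ ≤ C) {x : H} (hx : x ∈ (Φ.ap f).domain)
    (hx' : x ∈ (Φ.ap fun t => (‖f t‖ : 𝕜) ^ 2).domain) :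
    ⟪Φ.ap (fun t => (‖f t‖ : 𝕜) ^ 2) ⟨x, hx'⟩, x⟫_𝕜 = (‖Φ.ap f ⟨x, hx⟩‖ : 𝕜) ^ 2 := by
  have e : (fun t => (‖f t‖ : 𝕜) ^ 2) = (fun t => conj (f t)) * f :=
    funext fun t => (RCLike.conj_mul (f t)).symm
  have hcf : Measurable fun t => conj (f t) := RCLike.continuous_conj.measurable.comp hf
  have hcb : ∃ C, ∀ t, ‖conj (f t)‖ ≤ C :=
    hb.imp fun C hC t => (RCLike.norm_conj _).trans_le (hC t)
  have hfx := Φ.mem_domain_of_bounded hcf hcb (Φ.ap f ⟨x, hx⟩)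
  rw [Φ.ap_congr e hx' (e ▸ hx'), Φ.ap_mul_apply hcf hf hx hfx, ← inner_conj_symm,
    ← Φ.inner_ap_apply hf hb hx hfx, inner_self_eq_norm_sq_to_K]
  simp

theorem norm_sq_ap_apply_add_norm_sq_ap_apply {f g : X → 𝕜} (hf : Measurable f)
    (hg : Measurable g) {c : ℝ} (hfg : ∀ t, ‖f t‖ ^ 2 + ‖g t‖ ^ 2 = c) {x : H}
    (hxf : x ∈ (Φ.ap f).domain) (hxg : x ∈ (Φ.ap g).domain) :
    ‖Φ.ap f ⟨x, hxf⟩‖ ^ 2 + ‖Φ.ap g ⟨x, hxg⟩‖ ^ 2 = c * ‖x‖ ^ 2 := by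
  have hfb : ∃ C, ∀ t, ‖f t‖ ≤ C :=
    ⟨c + 1, fun t => by nlinarith [hfg t, sq_nonneg (‖f t‖ - 1), sq_nonneg ‖g t‖]⟩
  have hgb : ∃ C, ∀ t, ‖g t‖ ≤ C :=
    ⟨c + 1, fun t => by nlinarith [hfg t, sq_nonneg (‖g t‖ - 1), sq_nonneg ‖f t‖]⟩
  set F : X → 𝕜 := fun t => (‖f t‖ : 𝕜) ^ 2
  set G : X → 𝕜 := fun t => (‖g t‖ : 𝕜) ^ 2
  have hsum : F + G = fun _ => (c : 𝕜) := by
    funext t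
    simp only [Pi.add_apply, F, G, ← hfg t]
    push_cast
    ring
  have hF : Measurable F := (RCLike.continuous_ofReal.measurable.comp hf.norm).pow_const 2
  have hG : Measurable G := (RCLike.continuous_ofReal.measurable.comp hg.norm).pow_const 2
  have hxF : x ∈ (Φ.ap F).domain := Φ.mem_domain_of_bounded hF
    ⟨c, fun t => by simp only [norm_pow, norm_algebraMap', norm_norm, F]; nlinarith [hfg t, sq_nonneg ‖g t‖]⟩ x
  have hxG : x ∈ (Φ.ap G).domain := Φ.mem_domain_of_bounded hG
    ⟨c, fun t => by simp only [norm_pow, norm_algebraMap', norm_norm, G]; nlinarith [hfg t, sq_nonneg ‖f t‖]⟩ x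
  have hxc : x ∈ (Φ.ap fun _ => (c : 𝕜)).domain :=
    Φ.mem_domain_of_bounded measurable_const ⟨‖(c : 𝕜)‖, fun _ => le_rfl⟩ x
  have key : ⟪Φ.ap F ⟨x, hxF⟩, x⟫_𝕜 + ⟪Φ.ap G ⟨x, hxG⟩, x⟫_𝕜 = (c : 𝕜) * (‖x‖ : 𝕜) ^ 2 := by
    rw [← inner_add_left, ← Φ.ap_add_apply hF hG hxF hxG (hsum ▸ hxc), Φ.ap_congr hsum _ hxc,
      Φ.ap_const_apply, inner_smul_left, inner_self_eq_norm_sq_to_K, RCLike.conj_ofReal]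
  rw [Φ.inner_ap_norm_sq_apply_self hf hfb hxf, Φ.inner_ap_norm_sq_apply_self hg hgb hxg] at key
  exact_mod_cast key

theorem norm_ap_apply_le_of_nonneg {f : X → 𝕜} (hf : Measurable f) {C : ℝ} (hC : 0 ≤ C)
    (hfC : ∀ t, ‖f t‖ ≤ C) (x : (Φ.ap f).domain) : ‖Φ.ap f x‖ ≤ C * ‖(x : H)‖ := by
  have hsub : ∀ t, 0 ≤ C ^ 2 - ‖f t‖ ^ 2 := fun t => by
    nlinarith [hfC t, norm_nonneg (f t)]
  set g : X → 𝕜 := fun t => (√(C ^ 2 - ‖f t‖ ^ 2) : 𝕜)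
  have hg : Measurable g :=
    RCLike.continuous_ofReal.measurable.comp (measurable_const.sub (hf.norm.pow_const 2)).sqrt
  have hfg : ∀ t, ‖f t‖ ^ 2 + ‖g t‖ ^ 2 = C ^ 2 := fun t => by
    simp [g, Real.sq_sqrt (hsub t)]
  have hxg := Φ.mem_domain_of_bounded hg
    ⟨C, fun t => by nlinarith [hfg t, norm_nonneg (g t), sq_nonneg ‖f t‖]⟩ x
  have h := Φ.norm_sq_ap_apply_add_norm_sq_ap_apply hf hg hfg x.2 hxg
  have hsq : ‖Φ.ap f x‖ ^ 2 ≤ (C * ‖(x : H)‖) ^ 2 := by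
    nlinarith [sq_nonneg ‖Φ.ap g ⟨x, hxg⟩‖]
  exact (pow_le_pow_iff_left₀ (norm_nonneg _) (by positivity) two_ne_zero).mp hsq

theorem eq_zero_of_isEmpty [IsEmpty X] (Φ : MeasFC X 𝕜 H) (x : H) : x = 0 := by
  have hx := Φ.mem_domain_of_bounded (f := fun _ => 1) measurable_const ⟨0, isEmptyElim⟩ x
  have h := Φ.norm_ap_apply_le_of_nonneg measurable_const le_rfl isEmptyElim ⟨x, hx⟩
  rw [Φ.ap_one_apply, zero_mul] at h
  exact norm_le_zero_iff.mp h

theorem norm_ap_apply_le {f : X → 𝕜} (hf : Measurable f) {C : ℝ} (hfC : ∀ t, ‖f t‖ ≤ C)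
    (x : (Φ.ap f).domain) : ‖Φ.ap f x‖ ≤ C * ‖(x : H)‖ := by
  rcases le_or_gt 0 C with hC | hC
  · exact Φ.norm_ap_apply_le_of_nonneg hf hC hfC x
  · have : IsEmpty X := ⟨fun t => (hC.trans_le ((norm_nonneg _).trans (hfC t))).false⟩
    simp [Φ.eq_zero_of_isEmpty (x : H), Φ.eq_zero_of_isEmpty (Φ.ap f x)]

theorem dense_domain {f : X → 𝕜} (hf : Measurable f) : Dense ((Φ.ap f).domain : Set H) := by
  set B : ℕ → Set X := fun n => {t | ‖f t‖ ≤ n}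
  set e : ℕ → X → 𝕜 := fun n => (B n).indicator 1
  have hB : ∀ n, MeasurableSet (B n) := fun n => measurableSet_le hf.norm measurable_const
  have he : ∀ n, Measurable (e n) := fun n => measurable_one.indicator (hB n)
  have heb : ∀ n t, ‖e n t‖ ≤ 1 := fun n t => by
    by_cases ht : t ∈ B n <;> simp [e, ht]
  have hfeb : ∀ n : ℕ, ∀ t, ‖(f * e n) t‖ ≤ n := fun n t => by
    by_cases ht : t ∈ B n
    · simpa [e, Set.indicator_of_mem ht] using show ‖f t‖ ≤ n from ht
    · simp [e, ht]
  have hlim : ∀ t, Tendsto (fun n => e n t) atTop (𝓝 1) := fun t =>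
    tendsto_atTop_of_eventually_const (i₀ := ⌈‖f t‖⌉₊) fun n hn => by
      have ht : t ∈ B n := show ‖f t‖ ≤ n from (Nat.le_ceil _).trans (by exact_mod_cast hn)
      simp [e, ht]
  have hxe : ∀ n (z : H), z ∈ (Φ.ap (e n)).domain := fun n =>
    Φ.mem_domain_of_bounded (he n) ⟨1, heb n⟩
  have hrange : ∀ n (z : H), Φ.ap (e n) ⟨z, hxe n z⟩ ∈ (Φ.ap f).domain := fun n z =>
    Φ.ap_apply_mem_domain hf (he n) (hxe n z)
      (Φ.mem_domain_of_bounded (hf.mul (he n)) ⟨n, hfeb n⟩ z)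
  suffices h : (Φ.ap f).domainᗮ = ⊥ by
    rw [Submodule.dense_iff_topologicalClosure_eq_top,
      ← Submodule.orthogonal_orthogonal_eq_closure, h, Submodule.bot_orthogonal_eq_top]
  refine (Submodule.eq_bot_iff _).mpr fun z hz => inner_self_eq_zero (𝕜 := 𝕜) |>.mp ?_
  have h5 := Φ.mfc5 e (fun _ => 1) he measurable_const ⟨1, heb⟩ hlim z z (fun n => hxe n z)
    (Φ.mfc1 ▸ Submodule.mem_top)
  rw [Φ.ap_one_apply] at h5
  refine tendsto_nhds_unique (h5.congr fun n => ?_) tendsto_const_nhds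
  exact (Submodule.mem_orthogonal _ z).mp hz _ (hrange n z)

theorem tendsto_ap_apply_zero {f : ℕ → X → 𝕜} (hf : ∀ n, Measurable (f n))
    (hb : ∃ C, ∀ n t, ‖f n t‖ ≤ C) (hlim : ∀ t, Tendsto (fun n => f n t) atTop (𝓝 0)) {x : H}
    (hx : ∀ n, x ∈ (Φ.ap (f n)).domain) :
    Tendsto (fun n => Φ.ap (f n) ⟨x, hx n⟩) atTop (𝓝 0) := by
  obtain ⟨C, hC⟩ := hb
  set F : ℕ → X → 𝕜 := fun n t => (‖f n t‖ : 𝕜) ^ 2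
  have hF : ∀ n, Measurable (F n) := fun n =>
    (RCLike.continuous_ofReal.measurable.comp (hf n).norm).pow_const 2
  have hFb : ∃ C, ∀ n t, ‖F n t‖ ≤ C := ⟨C ^ 2, fun n t => by
    simpa [F] using pow_le_pow_left₀ (norm_nonneg _) (hC n t) 2⟩
  have hFlim : ∀ t, Tendsto (fun n => F n t) atTop (𝓝 0) := fun t => by
    rw [tendsto_zero_iff_norm_tendsto_zero]
    simpa [F] using (tendsto_zero_iff_norm_tendsto_zero.mp (hlim t)).pow 2
  have hxF : ∀ n, x ∈ (Φ.ap (F n)).domain := fun n =>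
    Φ.mem_domain_of_bounded (hF n) (hFb.imp fun C hC => hC n) x
  have hx0 : x ∈ (Φ.ap fun _ => 0).domain :=
    Φ.mem_domain_of_bounded measurable_const ⟨0, fun _ => norm_zero.le⟩ x
  have h5 := (Φ.mfc5 F (fun _ => 0) hF measurable_const hFb hFlim x x hxF hx0).congr fun n =>
    Φ.inner_ap_norm_sq_apply_self (hf n) ⟨C, hC n⟩ (hx n) (hxF n)
  rw [Φ.ap_const_apply, zero_smul, inner_zero_left] at h5
  rw [tendsto_zero_iff_norm_tendsto_zero]
  simpa using ((continuous_norm.tendsto 0).comp h5).sqrt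

theorem tendsto_ap_apply {f : ℕ → X → 𝕜} {g : X → 𝕜} (hf : ∀ n, Measurable (f n))
    (hg : Measurable g) (hb : ∃ C, ∀ n t, ‖f n t‖ ≤ C)
    (hlim : ∀ t, Tendsto (fun n => f n t) atTop (𝓝 (g t))) {x : H}
    (hxf : ∀ n, x ∈ (Φ.ap (f n)).domain) (hxg : x ∈ (Φ.ap g).domain) :
    Tendsto (fun n => Φ.ap (f n) ⟨x, hxf n⟩) atTop (𝓝 (Φ.ap g ⟨x, hxg⟩)) := by
  obtain ⟨C, hC⟩ := hb
  have hgC : ∀ t, ‖g t‖ ≤ C := fun t => le_of_tendsto (hlim t).norm (.of_forall (hC · t))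
  have hd : ∀ n, Measurable (f n - g) := fun n => (hf n).sub hg
  have hdb : ∃ C, ∀ n t, ‖(f n - g) t‖ ≤ C :=
    ⟨C + C, fun n t => (norm_sub_le _ _).trans (add_le_add (hC n t) (hgC t))⟩
  have hxd : ∀ n, x ∈ (Φ.ap (f n - g)).domain := fun n =>
    Φ.mem_domain_of_bounded (hd n) (hdb.imp fun C hC => hC n) x
  have h := Φ.tendsto_ap_apply_zero hd hdb (fun t => by simpa using (hlim t).sub_const (g t)) hxd
  simp only [fun n => Φ.ap_sub_apply (hf n) hg (hxf n) hxg (hxd n)] at h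
  exact tendsto_sub_nhds_zero_iff.mp h

end MeasFC

/-- Theorem 2.1 (d), (e), (f): every `Φ(f)` is densely defined; `‖Φ(f)‖ ≤ ‖f‖_∞` for
bounded `f`; and `Φ` is (strongly) bp-continuous. -/
theorem mfc_dense_contractive_bpContinuous (Φ : MeasFC X 𝕜 H) :
    -- (d) densely defined
    (∀ f : X → 𝕜, Measurable f → Dense ((Φ.ap f).domain : Set H)) ∧
    -- (e) norm bound by the sup norm
    (∀ (f : X → 𝕜), Measurable f → ∀ C : ℝ, (∀ x, ‖f x‖ ≤ C) →
      ∀ x : (Φ.ap f).domain, ‖Φ.ap f x‖ ≤ C * ‖(x : H)‖) ∧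
    -- (f) bp-continuity in the strong sense
    (∀ (f : ℕ → X → 𝕜) (g : X → 𝕜), (∀ n, Measurable (f n)) → Measurable g →
      (∃ C, ∀ n x, ‖f n x‖ ≤ C) →
      (∀ x, Filter.Tendsto (fun n => f n x) Filter.atTop (𝓝 (g x))) →
      ∀ (x : H) (hn : ∀ n, x ∈ (Φ.ap (f n)).domain) (hg : x ∈ (Φ.ap g).domain),
        Filter.Tendsto (fun n => Φ.ap (f n) ⟨x, hn n⟩) Filter.atTop
          (𝓝 (Φ.ap g ⟨x, hg⟩))) :=
  ⟨fun _ hf => Φ.dense_domain hf,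
    fun _ hf _ hC x => Φ.norm_ap_apply_le hf hC x,
    fun _ _ hf hg hb hlim _ hxf hxg => Φ.tendsto_ap_apply hf hg hb hlim hxf hxg⟩

end
end

section
/- Let Φ be a measurable functional calculus on (X, Σ) and let f, g : X → 𝕜 be measurable. Then: (a) dom(Φ(f)) ∩ dom(Φ(g)) is a core for Φ(g), i.e. Φ(g) is the closure of its restriction to dom(Φ(f)) ∩ dom(Φ(g)); (b) the closure of the operator Φ(f) + Φ(g) equals Φ(f + g), and the closure of the operator Φ(f)Φ(g) equals Φ(fg). -/
open scoped Topology

noncomputable section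

/-!
Cut off on the sublevel sets `Bₙ = {‖f‖ + ‖g‖ ≤ n}`. By (MFC3) the bounded operators
`Pₙ = Φ(𝟙_{Bₙ})` map `H` into the domains of `Φ(f)`, `Φ(g)`, `Φ(fg)`, and for `z ∈ dom Φ(h)` we have
`Φ(h) Pₙ z = Φ(h 𝟙_{Bₙ}) z = Pₙ Φ(h) z`. Since `𝟙_{Bₙ} → 1` boundedly, `Pₙ → I` strongly: (MFC5)
applied to `|uₙ - u|²` together with (MFC4) gives `‖Φ(uₙ)y - Φ(u)y‖² = re ⟪Φ(|uₙ - u|²)y, y⟫ → 0`.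
So `(Pₙ z, Φ(h) Pₙ z) → (z, Φ(h) z)` within the graph of each of the three operators, all of which
are restrictions of the closed operator `Φ(h)`.
-/

open Filter

namespace LinearPMap

section Closure

variable {R E F : Type*} [CommRing R] [AddCommGroup E] [AddCommGroup F] [Module R E]
  [Module R F] [TopologicalSpace E] [TopologicalSpace F] [ContinuousAdd E] [ContinuousAdd F]
  [TopologicalSpace R] [ContinuousSMul R E] [ContinuousSMul R F]

theorem closure_eq_of_graph_le {S T : E →ₗ.[R] F} (hT : T.IsClosed) (hST : S ≤ T)
    (h : T.graph ≤ S.graph.topologicalClosure) : S.closure = T := by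
  refine eq_of_eq_graph ?_
  rw [← (hT.isClosable.leIsClosable hST).graph_closure_eq_closure_graph]
  exact le_antisymm (Submodule.topologicalClosure_minimal _ (le_graph_of_le hST) hT) h

end Closure

variable {R E : Type*} [Ring R] [AddCommGroup E] [Module R E]

theorem mem_domain_compP_iff {S T : E →ₗ.[R] E} {x : E} :
    x ∈ (S.compP T).domain ↔ ∃ hx : x ∈ T.domain, T ⟨x, hx⟩ ∈ S.domain := by
  constructor
  · rintro ⟨z, hz, rfl⟩
    exact ⟨z.2, hz⟩
  · rintro ⟨hx, hTx⟩
    exact ⟨⟨x, hx⟩, hTx, rfl⟩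

theorem compP_apply {S T : E →ₗ.[R] E} {x : E} (hx : x ∈ T.domain) (hTx : T ⟨x, hx⟩ ∈ S.domain) :
    S.compP T ⟨x, mem_domain_compP_iff.2 ⟨hx, hTx⟩⟩ = S ⟨T ⟨x, hx⟩, hTx⟩ :=
  rfl

end LinearPMap

theorem Set.exists_norm_indicator_one_mul_le {X 𝕜 : Type*} [NormedRing 𝕜] [NormOneClass 𝕜]
    {s : Set X} {h : X → 𝕜} (hh : ∃ C, ∀ x ∈ s, ‖h x‖ ≤ C) :
    ∃ C, ∀ x, ‖(s.indicator (1 : X → 𝕜) * h) x‖ ≤ C := by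
  obtain ⟨C, hC⟩ := hh
  refine ⟨max C 0, fun x => ?_⟩
  by_cases hx : x ∈ s
  · simpa [hx] using Or.inl (hC x hx)
  · simp [hx]

namespace MeasFC

variable {𝕜 : Type*} [RCLike 𝕜] {X : Type*} [MeasurableSpace X]
  {H : Type*} [NormedAddCommGroup H] [InnerProductSpace 𝕜 H] [CompleteSpace H]
  (Φ : MeasFC X 𝕜 H)

theorem mem_domain_of_bdd {u : X → 𝕜} (hu : Measurable u) (hb : ∃ C, ∀ x, ‖u x‖ ≤ C) (y : H) :
    y ∈ (Φ.ap u).domain := by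
  rw [Φ.mfc4_dom u hu hb]
  exact Submodule.mem_top

open Classical in
/-- `Φ(u)` as a total function on `H`, with junk value `0` off its domain. -/
def app (u : X → 𝕜) (y : H) : H :=
  if h : y ∈ (Φ.ap u).domain then Φ.ap u ⟨y, h⟩ else 0

theorem app_eq {u : X → 𝕜} {y : H} (hy : y ∈ (Φ.ap u).domain) : Φ.app u y = Φ.ap u ⟨y, hy⟩ :=
  dif_pos hy

theorem app_eq_of_le {u : X → 𝕜} {A : H →ₗ.[𝕜] H} (hA : A ≤ Φ.ap u) {y : H}
    (hy : y ∈ A.domain) : Φ.app u y = A ⟨y, hy⟩ := by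
  rw [Φ.app_eq (hA.1 hy)]
  exact (hA.2 rfl).symm

theorem app_one (y : H) : Φ.app (fun _ => 1) y = y :=
  Φ.app_eq_of_le Φ.mfc1.ge (Submodule.mem_top : y ∈ ⊤)

theorem app_smul (c : 𝕜) {u : X → 𝕜} (hu : Measurable u) {y : H} (hy : y ∈ (Φ.ap u).domain) :
    Φ.app (fun x => c * u x) y = c • Φ.app u y := by
  rw [Φ.app_eq_of_le (Φ.mfc2_smul c u hu) (hy : y ∈ (c • Φ.ap u).domain), Φ.app_eq hy]
  rfl

theorem app_zero (y : H) : Φ.app (fun _ => 0) y = 0 := by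
  have hy : y ∈ (Φ.ap fun _ => 1).domain := by
    rw [Φ.mfc1]
    exact Submodule.mem_top
  simpa using Φ.app_smul 0 measurable_const hy

theorem app_add {u v : X → 𝕜} (hu : Measurable u) (hv : Measurable v) {y : H}
    (hyu : y ∈ (Φ.ap u).domain) (hyv : y ∈ (Φ.ap v).domain) :
    Φ.app (u + v) y = Φ.app u y + Φ.app v y := by
  rw [Φ.app_eq_of_le (Φ.mfc2_add u v hu hv) (Submodule.mem_inf.2 ⟨hyu, hyv⟩), Φ.app_eq hyu,
    Φ.app_eq hyv]
  rfl

theorem app_sub {u v : X → 𝕜} (hu : Measurable u) (hv : Measurable v)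
    (hub : ∃ C, ∀ x, ‖u x‖ ≤ C) (hvb : ∃ C, ∀ x, ‖v x‖ ≤ C) (y : H) :
    Φ.app (u - v) y = Φ.app u y - Φ.app v y := by
  have hneg : Measurable fun x => -1 * v x := measurable_const.mul hv
  have hnegb : ∃ C, ∀ x, ‖-1 * v x‖ ≤ C := by simpa using hvb
  rw [show u - v = u + fun x => -1 * v x by ext; simp [sub_eq_add_neg],
    Φ.app_add hu hneg (Φ.mem_domain_of_bdd hu hub y) (Φ.mem_domain_of_bdd hneg hnegb y),
    Φ.app_smul _ hv (Φ.mem_domain_of_bdd hv hvb y), neg_one_smul, sub_eq_add_neg]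

theorem app_mul {u v : X → 𝕜} (hu : Measurable u) (hv : Measurable v) {y : H}
    (hyv : y ∈ (Φ.ap v).domain) (hvy : Φ.app v y ∈ (Φ.ap u).domain) :
    Φ.app (u * v) y = Φ.app u (Φ.app v y) := by
  rw [Φ.app_eq hyv] at hvy ⊢
  rw [Φ.app_eq_of_le (Φ.mfc3_le u v hu hv) (LinearPMap.mem_domain_compP_iff.2 ⟨hyv, hvy⟩),
    LinearPMap.compP_apply, Φ.app_eq hvy]

theorem app_mem_domain {u v : X → 𝕜} (hu : Measurable u) (hv : Measurable v)
    (hvb : ∃ C, ∀ x, ‖v x‖ ≤ C) (huvb : ∃ C, ∀ x, ‖(u * v) x‖ ≤ C) (y : H) :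
    Φ.app v y ∈ (Φ.ap u).domain := by
  have hy : y ∈ ((Φ.ap u).compP (Φ.ap v)).domain := by
    rw [Φ.mfc3_dom u v hu hv]
    exact ⟨Φ.mem_domain_of_bdd hv hvb y, Φ.mem_domain_of_bdd (hu.mul hv) huvb y⟩
  obtain ⟨hyv, hvy⟩ := LinearPMap.mem_domain_compP_iff.1 hy
  rwa [Φ.app_eq hyv]

theorem app_indicator_mem_domain {s : Set X} (hs : MeasurableSet s) {u : X → 𝕜}
    (hu : Measurable u) (hus : ∃ C, ∀ x ∈ s, ‖u x‖ ≤ C) (y : H) :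
    Φ.app (s.indicator (1 : X → 𝕜)) y ∈ (Φ.ap u).domain := by
  refine Φ.app_mem_domain hu (measurable_one.indicator hs) ⟨1, fun x => ?_⟩ ?_ y
  · simpa using norm_indicator_le_norm_self (1 : X → 𝕜) x
  · simpa only [mul_comm u] using Set.exists_norm_indicator_one_mul_le hus

theorem inner_app_conj {u : X → 𝕜} (hu : Measurable u) (hub : ∃ C, ∀ x, ‖u x‖ ≤ C) (x y : H) :
    inner 𝕜 (Φ.app (fun t => starRingEnd 𝕜 (u t)) x) y = inner 𝕜 x (Φ.app u y) := by
  have hdense : Dense ((Φ.ap u).domain : Set H) := by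
    simp [Φ.mfc4_dom u hu hub, dense_univ]
  have hx : x ∈ (Φ.ap u).adjoint.domain := by
    rw [Φ.mfc4_star u hu hub]
    exact Φ.mem_domain_of_bdd (RCLike.continuous_conj.measurable.comp hu) (by simpa using hub) x
  have hy := Φ.mem_domain_of_bdd hu hub y
  rw [Φ.app_eq_of_le (Φ.mfc4_star u hu hub).le hx, Φ.app_eq hy]
  exact LinearPMap.adjoint_isFormalAdjoint hdense ⟨x, hx⟩ ⟨y, hy⟩

theorem norm_app_sq {u : X → 𝕜} (hu : Measurable u) (hub : ∃ C, ∀ x, ‖u x‖ ≤ C) (y : H) :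
    ‖Φ.app u y‖ ^ 2 = RCLike.re (inner 𝕜 (Φ.app (fun t => starRingEnd 𝕜 (u t) * u t) y) y) := by
  have hconj : Measurable fun t => starRingEnd 𝕜 (u t) := RCLike.continuous_conj.measurable.comp hu
  obtain ⟨C, hC⟩ := hub
  have hsq : ∃ C, ∀ x, ‖starRingEnd 𝕜 (u x) * u x‖ ≤ C :=
    ⟨C * C, fun x => by
      simpa only [norm_mul, RCLike.norm_conj] using
        mul_le_mul (hC x) (hC x) (norm_nonneg _) ((norm_nonneg _).trans (hC x))⟩
  rw [show (fun t => starRingEnd 𝕜 (u t) * u t) = (fun t => starRingEnd 𝕜 (u t)) * u from rfl,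
    Φ.app_mul hconj hu (Φ.mem_domain_of_bdd hu ⟨C, hC⟩ y)
      (Φ.mem_domain_of_bdd hconj ⟨C, by simpa using hC⟩ _),
    Φ.inner_app_conj hu ⟨C, hC⟩, inner_self_eq_norm_sq]

theorem tendsto_app {u : ℕ → X → 𝕜} {v : X → 𝕜} (hu : ∀ n, Measurable (u n))
    (hv : Measurable v) (hb : ∃ C, ∀ n x, ‖u n x‖ ≤ C)
    (hlim : ∀ x, Tendsto (fun n => u n x) atTop (𝓝 (v x))) (y : H) :
    Tendsto (fun n => Φ.app (u n) y) atTop (𝓝 (Φ.app v y)) := by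
  obtain ⟨C, hC⟩ := hb
  have hvb : ∀ x, ‖v x‖ ≤ C := fun x =>
    le_of_tendsto' (hlim x).norm fun n => hC n x
  set d : ℕ → X → 𝕜 := fun n => u n - v
  have hd : ∀ n, Measurable (d n) := fun n => (hu n).sub hv
  have hdb : ∀ n x, ‖d n x‖ ≤ C + C := fun n x =>
    (norm_sub_le _ _).trans (add_le_add (hC n x) (hvb x))
  set e : ℕ → X → 𝕜 := fun n t => starRingEnd 𝕜 (d n t) * d n t
  have he : ∀ n, Measurable (e n) := fun n =>
    (RCLike.continuous_conj.measurable.comp (hd n)).mul (hd n)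
  have heb : ∀ n x, ‖e n x‖ ≤ (C + C) * (C + C) := fun n x => by
    simpa only [e, norm_mul, RCLike.norm_conj] using
      mul_le_mul (hdb n x) (hdb n x) (norm_nonneg _) ((norm_nonneg _).trans (hdb n x))
  have helim : ∀ x, Tendsto (fun n => e n x) atTop (𝓝 0) := fun x => by
    have hdx : Tendsto (fun n => d n x) atTop (𝓝 0) := by
      simpa [d] using (hlim x).sub_const (v x)
    simpa using ((RCLike.continuous_conj.tendsto 0).comp hdx).mul hdx
  have hy0 := Φ.mem_domain_of_bdd measurable_const ⟨0, fun _ => (norm_zero (E := 𝕜)).le⟩ y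
  have hweak : Tendsto (fun n => inner 𝕜 (Φ.app (e n) y) y) atTop (𝓝 0) := by
    have h5 := Φ.mfc5 e (fun _ => 0) he measurable_const ⟨_, heb⟩ helim y y
      (fun n => Φ.mem_domain_of_bdd (he n) ⟨_, heb n⟩ y) hy0
    rw [← Φ.app_eq hy0, app_zero, inner_zero_left] at h5
    exact h5.congr fun n => (congrArg (inner 𝕜 · y) (Φ.app_eq _)).symm
  have hsq : ∀ n, ‖Φ.app (u n) y - Φ.app v y‖ ^ 2 = RCLike.re (inner 𝕜 (Φ.app (e n) y) y) :=
    fun n => by rw [← Φ.app_sub (hu n) hv ⟨C, hC n⟩ ⟨C, hvb⟩, Φ.norm_app_sq (hd n) ⟨_, hdb n⟩]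
  rw [tendsto_iff_norm_sub_tendsto_zero]
  have := (((RCLike.continuous_re.tendsto 0).comp hweak).congr fun n => (hsq n).symm).sqrt
  simpa [Real.sqrt_sq (norm_nonneg _)] using this

theorem closure_eq_of_le {S : H →ₗ.[𝕜] H} {h : X → 𝕜} (hh : Measurable h) (hS : S ≤ Φ.ap h)
    {φ : X → ℝ} (hφ : Measurable φ) (hhφ : ∀ n : ℕ, ∃ C, ∀ x, φ x ≤ n → ‖h x‖ ≤ C)
    (hdom : ∀ (n : ℕ) y, Φ.app ({x | φ x ≤ n}.indicator (1 : X → 𝕜)) y ∈ S.domain) :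
    S.closure = Φ.ap h := by
  set P : ℕ → X → 𝕜 := fun n => {x | φ x ≤ n}.indicator 1
  have hP : ∀ n, Measurable (P n) := fun n =>
    measurable_const.indicator (measurableSet_le hφ measurable_const)
  have hPb : ∀ n x, ‖P n x‖ ≤ 1 := fun n x => by
    simpa using norm_indicator_le_norm_self (1 : X → 𝕜) x
  have hPlim : ∀ y, Tendsto (fun n => Φ.app (P n) y) atTop (𝓝 y) := fun y => by
    have hlim : ∀ x, Tendsto (fun n => P n x) atTop (𝓝 1) := fun x => by
      obtain ⟨N, hN⟩ := exists_nat_ge (φ x)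
      refine tendsto_const_nhds.congr' (eventually_atTop.2 ⟨N, fun n hn => ?_⟩)
      have hx : φ x ≤ n := hN.trans (Nat.cast_le.2 hn)
      simp [P, hx]
    simpa only [Φ.app_one] using Φ.tendsto_app hP measurable_const ⟨1, hPb⟩ hlim y
  have hPdom : ∀ n y, y ∈ (Φ.ap (P n)).domain := fun n =>
    Φ.mem_domain_of_bdd (hP n) ⟨1, hPb n⟩
  have hPh : ∀ n, ∃ C, ∀ x, ‖(P n * h) x‖ ≤ C := fun n =>
    Set.exists_norm_indicator_one_mul_le (hhφ n)
  refine LinearPMap.closure_eq_of_graph_le (Φ.isClosed h hh) hS ?_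
  intro p hp
  obtain ⟨z, rfl⟩ := (LinearPMap.mem_graph_iff' _).1 hp
  have hcomm : ∀ n, S ⟨Φ.app (P n) z, hdom n z⟩ = Φ.app (P n) (Φ.ap h z) := fun n => by
    rw [← Φ.app_eq_of_le hS, ← Φ.app_mul hh (hP n) (hPdom n z) (hS.1 (hdom n z)), mul_comm,
      Φ.app_mul (hP n) hh z.2, Φ.app_eq z.2]
    · rw [Φ.app_eq z.2]
      exact hPdom n _
  refine mem_closure_of_tendsto ((hPlim z).prodMk_nhds ?_)
    (Eventually.of_forall fun n => S.mem_graph ⟨_, hdom n z⟩)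
  exact (hPlim _).congr fun n => (hcomm n).symm

end MeasFC

variable {𝕜 : Type*} [RCLike 𝕜] {X : Type*} [MeasurableSpace X]
  {H : Type*} [NormedAddCommGroup H] [InnerProductSpace 𝕜 H] [CompleteSpace H]

/-- Theorem 2.4 (a), (b): `dom Φ(f) ∩ dom Φ(g)` is a core for `Φ(g)`, and the closures of
`Φ(f) + Φ(g)` resp. `Φ(f)Φ(g)` are `Φ(f+g)` resp. `Φ(fg)`. -/
theorem mfc_core_and_closures (Φ : MeasFC X 𝕜 H) (f g : X → 𝕜)
    (hf : Measurable f) (hg : Measurable g) :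
    -- (a) dom Φ(f) ⊓ dom Φ(g) is a core for Φ(g)
    ((Φ.ap g).domRestrict ((Φ.ap f).domain ⊓ (Φ.ap g).domain)).closure = Φ.ap g ∧
    -- (b) closure of the sum and of the product
    (Φ.ap f + Φ.ap g).closure = Φ.ap (f + g) ∧
    ((Φ.ap f).compP (Φ.ap g)).closure = Φ.ap (f * g) := by
  set φ : X → ℝ := fun x => ‖f x‖ + ‖g x‖
  have hφ : Measurable φ := hf.norm.add hg.norm
  have hfφ : ∀ n : ℕ, ∃ C, ∀ x, φ x ≤ n → ‖f x‖ ≤ C := fun n =>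
    ⟨n, fun x hx => by linarith [norm_nonneg (g x)]⟩
  have hgφ : ∀ n : ℕ, ∃ C, ∀ x, φ x ≤ n → ‖g x‖ ≤ C := fun n =>
    ⟨n, fun x hx => by linarith [norm_nonneg (f x)]⟩
  have hsumφ : ∀ n : ℕ, ∃ C, ∀ x, φ x ≤ n → ‖(f + g) x‖ ≤ C := fun n =>
    ⟨n, fun x hx => (norm_add_le _ _).trans hx⟩
  have hprodφ : ∀ n : ℕ, ∃ C, ∀ x, φ x ≤ n → ‖(f * g) x‖ ≤ C := fun n =>
    ⟨n * n, fun x hx => by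
      rw [Pi.mul_apply, norm_mul]
      nlinarith [norm_nonneg (f x), norm_nonneg (g x)]⟩
  have hmem : ∀ {u : X → 𝕜}, Measurable u → (∀ n : ℕ, ∃ C, ∀ x, φ x ≤ n → ‖u x‖ ≤ C) →
      ∀ (n : ℕ) y, Φ.app ({x | φ x ≤ n}.indicator (1 : X → 𝕜)) y ∈ (Φ.ap u).domain := fun hu hb n =>
    Φ.app_indicator_mem_domain (measurableSet_le hφ measurable_const) hu (hb n)
  refine ⟨Φ.closure_eq_of_le hg LinearPMap.domRestrict_le hφ hgφ fun n y =>
      ⟨⟨hmem hf hfφ n y, hmem hg hgφ n y⟩, hmem hg hgφ n y⟩,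
    Φ.closure_eq_of_le (hf.add hg) (Φ.mfc2_add f g hf hg) hφ hsumφ fun n y =>
      ⟨hmem hf hfφ n y, hmem hg hgφ n y⟩,
    Φ.closure_eq_of_le (hf.mul hg) (Φ.mfc3_le f g hf hg) hφ hprodφ fun n y => ?_⟩
  rw [Φ.mfc3_dom f g hf hg]
  exact ⟨hmem hg hgφ n y, hmem (hf.mul hg) hprodφ n y⟩
end
end
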